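/- arXiv:1912.03674 — 2 statements merged into one kernel-verified Lean document; each statement's English description precedes it below -/
import Mathlib

section
/- For every integer n ≥ 1, the number of inversion sequences of length n avoiding both patterns 001 and 210 equals the n-th cake number: |I_n(001,210)| = binom(n,3) + n. -/
/-!
An inversion sequence avoiding 001 and 210 begins with a saturated staircase `0, 1, …, y`.
Every later value `v ≤ y` also sits at the saturated position `v`, so avoiding 001 makes the
tail weakly decreasing and bounded by `y`, and avoiding 210 (against the value `v + 1` at
position `v + 1`) allows a strict descent only from the value `y`. Hence the sequence reads
`min i y` up to some position `z` and is a constant `x < y` from `z` on. The triples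
`x < y < z < n` contribute `binom(n,3)` sequences and the sequences `min i y` another `n`.
-/

/-- An inversion sequence of length `n` (0-indexed): `e i ≤ i` for all `i`. -/
def InvSeq {n : ℕ} (e : Fin n → ℕ) : Prop := ∀ i : Fin n, e i ≤ (i : ℕ)

/-- `e` contains the pattern `p` (a word of nonnegative integers): there is a
strictly increasing choice of positions on which `e` is order-isomorphic to `p`. -/
def Contains {n : ℕ} (e : Fin n → ℕ) (p : List ℕ) : Prop :=
  ∃ s : Fin p.length → Fin n, StrictMono s ∧
    ∀ a b : Fin p.length,
      (p.get a < p.get b ↔ e (s a) < e (s b)) ∧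
      (p.get a = p.get b ↔ e (s a) = e (s b))

/-- `e` avoids the pattern `p`. -/
def Avoids {n : ℕ} (e : Fin n → ℕ) (p : List ℕ) : Prop := ¬ Contains e p

/-- The number of zero entries of `e`. -/
def zeroStat {n : ℕ} (e : Fin n → ℕ) : ℕ :=
  (Finset.univ.filter (fun i : Fin n => e i = 0)).card

/-- The number of distinct positive values among the entries of `e`. -/
def distStat {n : ℕ} (e : Fin n → ℕ) : ℕ :=
  ((Finset.univ.image e).filter (fun v => 0 < v)).card

/-- The number of repeated entries of `e`: `n - dist e`. -/
def repStat {n : ℕ} (e : Fin n → ℕ) : ℕ := n - distStat e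

/-- The number of saturated entries of `e` (1-indexed: `e_i = i - 1`). -/
def satuStat {n : ℕ} (e : Fin n → ℕ) : ℕ :=
  (Finset.univ.filter (fun i : Fin n => e i = (i : ℕ))).card

section

variable {n : ℕ}

lemma contains_triple_iff (e : Fin n → ℕ) (p q r : ℕ) :
    Contains e [p, q, r] ↔ ∃ i j k : Fin n, i < j ∧ j < k ∧ ∀ a b : Fin 3,
      (![p, q, r] a < ![p, q, r] b ↔ e (![i, j, k] a) < e (![i, j, k] b)) ∧
      (![p, q, r] a = ![p, q, r] b ↔ e (![i, j, k] a) = e (![i, j, k] b)) := by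
  have hget : ∀ a : Fin 3, [p, q, r].get a = ![p, q, r] a := by
    intro a; fin_cases a <;> rfl
  constructor
  · rintro ⟨s, hs, hsp⟩
    have hs' : ![s 0, s 1, s 2] = s := by ext a; fin_cases a <;> rfl
    refine ⟨s 0, s 1, s 2, hs (show (0 : Fin 3) < 1 by decide),
      hs (show (1 : Fin 3) < 2 by decide), fun a b => ?_⟩
    rw [hs', ← hget, ← hget]
    exact hsp a b
  · rintro ⟨i, j, k, hij, hjk, hijk⟩
    refine ⟨![i, j, k], Fin.strictMono_iff_lt_succ.2 fun a => ?_, fun a b => ?_⟩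
    · fin_cases a
      exacts [hij, hjk]
    · rw [hget, hget]
      exact hijk a b

lemma avoids_001_iff (e : Fin n → ℕ) :
    Avoids e [0, 0, 1] ↔ ∀ i j k : Fin n, i < j → j < k → e i = e j → e k ≤ e j := by
  rw [Avoids, contains_triple_iff]
  simp only [Fin.forall_fin_succ, IsEmpty.forall_iff, Matrix.cons_val_zero,
    Matrix.cons_val_succ, and_true, true_iff]
  refine ⟨fun h i j k hij hjk heq => ?_, fun h ⟨i, j, k, hij, hjk, hp⟩ => ?_⟩
  · by_contra hlt
    exact h ⟨i, j, k, hij, hjk, by omega⟩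
  · have := h i j k hij hjk
    omega

lemma avoids_210_iff (e : Fin n → ℕ) :
    Avoids e [2, 1, 0] ↔ ∀ i j k : Fin n, i < j → j < k → e j < e i → e j ≤ e k := by
  rw [Avoids, contains_triple_iff]
  simp only [Fin.forall_fin_succ, IsEmpty.forall_iff, Matrix.cons_val_zero,
    Matrix.cons_val_succ, and_true]
  refine ⟨fun h i j k hij hjk hji => ?_, fun h ⟨i, j, k, hij, hjk, hp⟩ => ?_⟩
  · by_contra hkj
    exact h ⟨i, j, k, hij, hjk, by omega⟩
  · have := h i j k hij hjk
    omega

def stairSeq (x y z : ℕ) (i : Fin n) : ℕ := if (i : ℕ) < z then min (i : ℕ) y else x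

lemma invSeq_stairSeq {x z : ℕ} (y : ℕ) (hxz : x ≤ z) : InvSeq (stairSeq (n := n) x y z) := by
  intro i
  unfold stairSeq
  split_ifs <;> omega

lemma avoids_001_stairSeq {x y : ℕ} (z : ℕ) (hxy : x ≤ y) :
    Avoids (stairSeq (n := n) x y z) [0, 0, 1] := by
  refine (avoids_001_iff _).2 fun i j k hij hjk => ?_
  rw [Fin.lt_def] at hij hjk
  unfold stairSeq
  split_ifs <;> omega

lemma avoids_210_stairSeq (x y z : ℕ) : Avoids (stairSeq (n := n) x y z) [2, 1, 0] := by
  refine (avoids_210_iff _).2 fun i j k hij hjk => ?_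
  rw [Fin.lt_def] at hij hjk
  unfold stairSeq
  split_ifs <;> omega

/-- `(y, y, y + 1)` stands for the sequence `min i y`. -/
def stairParams (n : ℕ) : Finset (ℕ × ℕ × ℕ) :=
  ((Finset.range n).sigma fun z => (Finset.range z).sigma fun y => Finset.range y).image
    (fun t => (t.2.2, t.2.1, t.1)) ∪ (Finset.range n).image fun y => (y, y, y + 1)

lemma mem_stairParams {x y z : ℕ} : (x, y, z) ∈ stairParams n ↔
    x < y ∧ y < z ∧ z < n ∨ x = y ∧ z = y + 1 ∧ y < n := by
  simp only [stairParams, Finset.mem_union, Finset.mem_image, Finset.mem_sigma,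
    Finset.mem_range, Prod.mk.injEq, Sigma.exists]
  constructor
  · rintro (⟨z, y, x, ⟨hz, hy, hx⟩, rfl, rfl, rfl⟩ | ⟨y, hy, rfl, rfl, rfl⟩) <;> omega
  · rintro (⟨hxy, hyz, hz⟩ | ⟨rfl, rfl, hy⟩)
    exacts [Or.inl ⟨z, y, x, ⟨hz, hyz, hxy⟩, rfl, rfl, rfl⟩, Or.inr ⟨x, hy, rfl, rfl, rfl⟩]

lemma exists_saturated_prefix {e : Fin n → ℕ} (hn : 0 < n) (hinv : InvSeq e)
    (h001 : Avoids e [0, 0, 1]) :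
    ∃ y < n, (∀ i : Fin n, (i : ℕ) ≤ y → e i = i) ∧ ∀ j : Fin n, y < j → e j ≤ y := by
  by_cases hsat : ∀ i : Fin n, e i = i
  · exact ⟨n - 1, by omega, fun i _ => hsat i, fun j hj => by omega⟩
  push Not at hsat
  obtain ⟨a, ha⟩ := exists_minimal_of_wellFoundedLT (fun i : Fin n => e i ≠ i) hsat
  have hsat_lt (i : Fin n) (hi : i < a) : e i = i := not_not.1 (ha.not_prop_of_lt hi)
  have hea : e a < a := lt_of_le_of_ne (hinv a) ha.1
  refine ⟨a - 1, by omega, fun i hi => hsat_lt i (by rw [Fin.lt_def]; omega), fun j hj => ?_⟩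
  obtain rfl | haj := eq_or_lt_of_le (show a ≤ j by rw [Fin.le_def]; omega)
  · omega
  have := (avoids_001_iff e).1 h001 ⟨e a, by omega⟩ a j hea haj (hsat_lt _ hea)
  omega

lemma exists_mem_stairParams_stairSeq_eq {e : Fin n → ℕ} (hn : 0 < n) (hinv : InvSeq e)
    (h001 : Avoids e [0, 0, 1]) (h210 : Avoids e [2, 1, 0]) :
    ∃ t ∈ stairParams n, stairSeq t.1 t.2.1 t.2.2 = e := by
  obtain ⟨y, hyn, hpre, htail⟩ := exists_saturated_prefix hn hinv h001
  by_cases hcap : ∀ i : Fin n, e i = min (i : ℕ) y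
  · refine ⟨(y, y, y + 1), mem_stairParams.2 (Or.inr ⟨rfl, rfl, hyn⟩), funext fun i => ?_⟩
    simp only [stairSeq, hcap]
    split_ifs <;> omega
  push Not at hcap
  obtain ⟨z, hz⟩ := exists_minimal_of_wellFoundedLT (fun i : Fin n => e i ≠ min (i : ℕ) y) hcap
  have hbefore (i : Fin n) (hi : i < z) : e i = min (i : ℕ) y := not_not.1 (hz.not_prop_of_lt hi)
  have hyz : y < z := by
    by_contra! hzy
    exact hz.1 (by rw [hpre z hzy]; omega)
  have hez : e z < y := lt_of_le_of_ne (htail z hyz) (by have := hz.1; omega)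
  -- compare with the staircase entries `e z` and `e z + 1`, both placed before `z`
  have hafter (k : Fin n) (hk : z < k) : e k = e z := by
    have hle := (avoids_001_iff e).1 h001 ⟨e z, by omega⟩ z k
      (Fin.mk_lt_of_lt_val (by omega)) hk (hpre _ hez.le)
    have hge := (avoids_210_iff e).1 h210 ⟨e z + 1, by omega⟩ z k
      (Fin.mk_lt_of_lt_val (by omega)) hk (by simp [hpre ⟨e z + 1, by omega⟩ hez])
    omega
  refine ⟨(e z, y, z), mem_stairParams.2 (Or.inl ⟨hez, hyz, z.isLt⟩), funext fun i => ?_⟩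
  simp only [stairSeq]
  split_ifs with hi
  · exact (hbefore i hi).symm
  · obtain rfl | hzi := eq_or_lt_of_le (show z ≤ i by rw [Fin.le_def]; omega)
    · rfl
    · exact (hafter i hzi).symm

lemma stairSeq_injOn :
    Set.InjOn (fun t : ℕ × ℕ × ℕ => stairSeq (n := n) t.1 t.2.1 t.2.2) (stairParams n) := by
  rintro ⟨x, y, z⟩ h ⟨x', y', z'⟩ h' heq
  rw [Finset.mem_coe, mem_stairParams] at h h'
  have ev (i : ℕ) (hi : i < n) :
      (if i < z then min i y else x) = if i < z' then min i y' else x' :=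
    congrFun heq ⟨i, hi⟩
  have hy : y = y' := by
    by_contra hne
    rcases Nat.lt_or_gt_of_ne hne with hlt | hlt
    · have := ev (y + 1) (by omega); split_ifs at this <;> omega
    · have := ev (y' + 1) (by omega); split_ifs at this <;> omega
  subst hy
  have hz : z = z' := by
    by_contra hne
    have := ev z (by omega); have := ev z' (by omega)
    split_ifs at * <;> omega
  subst hz
  by_cases hz : z < n
  · simpa using ev z hz
  · obtain ⟨rfl, rfl⟩ : x = y ∧ x' = y := by omega
    rfl

end

lemma sum_range_choose_eq_choose_add_one (n k : ℕ) :
    ∑ i ∈ Finset.range n, i.choose k = n.choose (k + 1) := by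
  induction n with
  | zero => simp
  | succ n ih => rw [Finset.sum_range_succ, ih, Nat.choose_succ_succ' n k, add_comm]

lemma card_stairParams (n : ℕ) : (stairParams n).card = n.choose 3 + n := by
  rw [stairParams, Finset.card_union_of_disjoint, Finset.card_image_of_injective,
    Finset.card_image_of_injective, Finset.card_sigma]
  · have sum_range_id_eq (z : ℕ) : ∑ y ∈ Finset.range z, y = z.choose 2 := by
      simpa using sum_range_choose_eq_choose_add_one z 1
    simp only [Finset.card_sigma, Finset.card_range, sum_range_id_eq,
      sum_range_choose_eq_choose_add_one]
  · intro y y' h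
    simpa using h
  · rintro ⟨z, y, x⟩ ⟨z', y', x'⟩ h
    simp only [Prod.mk.injEq] at h
    obtain ⟨rfl, rfl, rfl⟩ := h
    rfl
  · simp only [Finset.disjoint_left, Finset.mem_image, Finset.mem_sigma, Finset.mem_range]
    rintro _ ⟨⟨z, y, x⟩, ⟨-, -, hxy⟩, rfl⟩ ⟨y', -, h⟩
    simp only [Prod.mk.injEq] at h hxy
    omega

theorem stmt_2 (n : ℕ) (hn : 1 ≤ n) :
    Nat.card {e : Fin n → ℕ // InvSeq e ∧ Avoids e [0,0,1] ∧ Avoids e [2,1,0]}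
      = Nat.choose n 3 + n := by
  have hchar (e : Fin n → ℕ) : InvSeq e ∧ Avoids e [0, 0, 1] ∧ Avoids e [2, 1, 0] ↔
      e ∈ (stairParams n).image fun t => stairSeq t.1 t.2.1 t.2.2 := by
    rw [Finset.mem_image]
    constructor
    · rintro ⟨hinv, h001, h210⟩
      exact exists_mem_stairParams_stairSeq_eq hn hinv h001 h210
    · rintro ⟨⟨x, y, z⟩, ht, rfl⟩
      have hxyz : x ≤ y ∧ x ≤ z := by rw [mem_stairParams] at ht; omega
      exact ⟨invSeq_stairSeq y hxyz.2, avoids_001_stairSeq z hxyz.1, avoids_210_stairSeq x y z⟩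
  rw [Nat.card_congr (Equiv.subtypeEquivRight hchar), Nat.card_eq_finsetCard,
    Finset.card_image_of_injOn stairSeq_injOn, card_stairParams]
end

section
/- For every integer n ≥ 1 and every pattern pair p ∈ {(012,021), (110,012)}, the number of inversion sequences of length n avoiding both patterns of p equals 2^n − n, i.e. |I_n(p)| = 2^n − n. -/
theorem Nat.card_subtype_eq_card_and_add_card_and_not {α : Type*} {P : α → Prop}
    (hP : Finite {a // P a}) (Q : α → Prop) :
    Nat.card {a // P a} = Nat.card {a // P a ∧ Q a} + Nat.card {a // P a ∧ ¬ Q a} :=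
  (Set.ncard_inter_add_ncard_sdiff_eq_ncard {a | P a} {a | Q a} hP).symm

theorem Nat.card_subtype_and_ne {α : Type*} {P : α → Prop} (hP : Finite {b // P b}) {a : α}
    (ha : P a) : Nat.card {b // P b ∧ b ≠ a} = Nat.card {b // P b} - 1 := by
  have hsingle : Nat.card {b // P b ∧ b = a} = 1 := Nat.card_eq_one_iff_unique.2
    ⟨⟨fun b c => Subtype.ext (b.2.2.trans c.2.2.symm)⟩, ⟨⟨a, ha, rfl⟩⟩⟩
  rw [Nat.card_subtype_eq_card_and_add_card_and_not hP (· = a), hsingle]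
  simp only [ne_eq, Nat.add_sub_cancel_left]

theorem Nat.card_subtype_fin_zero {α : Type*} {P : (Fin 0 → α) → Prop} {e : Fin 0 → α}
    (he : P e) : Nat.card {e // P e} = 1 :=
  Nat.card_eq_one_iff_unique.2 ⟨⟨fun _ _ => Subtype.ext (funext finZeroElim)⟩, ⟨⟨e, he⟩⟩⟩

theorem Nat.card_subtype_snoc {α : Type*} {n : ℕ} {P : (Fin (n + 1) → α) → Prop}
    {Q : (Fin n → α) → Prop} (hQ : ∀ e, Q e ↔ ∃ y, P (Fin.snoc e y))
    (huniq : ∀ e y z, P (Fin.snoc e y) → P (Fin.snoc e z) → y = z) :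
    Nat.card {e // P e} = Nat.card {e // Q e} := by
  refine Nat.card_eq_of_bijective (fun e => ⟨Fin.init e.1, (hQ _).2 ⟨e.1 (Fin.last n), ?_⟩⟩)
    ⟨?_, ?_⟩
  · rw [Fin.snoc_init_self]; exact e.2
  · rintro ⟨e, he⟩ ⟨f, hf⟩ h
    have hinit : Fin.init e = Fin.init f := congrArg Subtype.val h
    rw [← Fin.snoc_init_self e, hinit] at he
    rw [← Fin.snoc_init_self f] at hf
    rw [Subtype.mk.injEq, ← Fin.snoc_init_self e, ← Fin.snoc_init_self f, hinit, huniq _ _ _ he hf]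
  · rintro ⟨e, he⟩
    obtain ⟨y, hy⟩ := (hQ e).1 he
    exact ⟨⟨_, hy⟩, Subtype.ext (Fin.init_snoc (α := fun _ => α) _ _)⟩

section InversionSequences

variable {n : ℕ}

theorem contains_three_iff (e : Fin n → ℕ) (a b c : ℕ) :
    Contains e [a, b, c] ↔ ∃ i j k : Fin n, i < j ∧ j < k ∧
      ((a < b ↔ e i < e j) ∧ (a = b ↔ e i = e j)) ∧ ((a < c ↔ e i < e k) ∧ (a = c ↔ e i = e k)) ∧
        ((b < c ↔ e j < e k) ∧ (b = c ↔ e j = e k)) := by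
  change (∃ s : Fin 3 → Fin n, StrictMono s ∧ ∀ x y : Fin 3, _) ↔ _
  constructor
  · rintro ⟨s, hs, h⟩
    exact ⟨s 0, s 1, s 2, hs (by decide), hs (by decide), h 0 1, h 0 2, h 1 2⟩
  · rintro ⟨i, j, k, hij, hjk, h01, h02, h12⟩
    have hrefl (a u : ℕ) : (a < a ↔ u < u) ∧ (a = a ↔ u = u) := by omega
    have hsymm {a b u v : ℕ} (h : (a < b ↔ u < v) ∧ (a = b ↔ u = v)) :
        (b < a ↔ v < u) ∧ (b = a ↔ v = u) := by omega
    refine ⟨![i, j, k], Fin.strictMono_iff_lt_succ.2 fun x => ?_, fun x y => ?_⟩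
    · fin_cases x
      exacts [hij, hjk]
    · fin_cases x <;> fin_cases y
      exacts [hrefl _ _, h01, h02, hsymm h01, hrefl _ _, h12, hsymm h02, hsymm h12, hrefl _ _]

theorem contains_012_iff (e : Fin n → ℕ) :
    Contains e [0, 1, 2] ↔ ∃ i j k : Fin n, i < j ∧ j < k ∧ e i < e j ∧ e j < e k := by
  rw [contains_three_iff]
  constructor <;> rintro ⟨i, j, k, hij, hjk, h⟩ <;> exact ⟨i, j, k, hij, hjk, by omega⟩

theorem contains_021_iff (e : Fin n → ℕ) :
    Contains e [0, 2, 1] ↔ ∃ i j k : Fin n, i < j ∧ j < k ∧ e i < e k ∧ e k < e j := by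
  rw [contains_three_iff]
  constructor <;> rintro ⟨i, j, k, hij, hjk, h⟩ <;> exact ⟨i, j, k, hij, hjk, by omega⟩

theorem contains_110_iff (e : Fin n → ℕ) :
    Contains e [1, 1, 0] ↔ ∃ i j k : Fin n, i < j ∧ j < k ∧ e i = e j ∧ e k < e j := by
  rw [contains_three_iff]
  constructor <;> rintro ⟨i, j, k, hij, hjk, h⟩ <;> exact ⟨i, j, k, hij, hjk, by omega⟩

theorem InvSeq.exists_zero_lt {e : Fin n → ℕ} (he : InvSeq e) (hn : 0 < n) :
    ∃ z, e z = 0 ∧ ∀ j, 0 < e j → z < j := by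
  refine ⟨⟨0, hn⟩, Nat.le_zero.1 (he _), fun j hj => Fin.mk_lt_of_lt_val ?_⟩
  have := he j
  omega

def ConstPos (e : Fin n → ℕ) : Prop :=
  InvSeq e ∧ ∀ i j, 0 < e i → 0 < e j → e i = e j

def StrictAntiPos (x : ℕ) (e : Fin n → ℕ) : Prop :=
  InvSeq e ∧ (∀ i, 0 < e i → x < e i) ∧ ∀ i j, i < j → 0 < e i → 0 < e j → e j < e i

def WeakAntiPos (e : Fin n → ℕ) : Prop :=
  InvSeq e ∧ (∀ i j, i < j → 0 < e i → e j ≤ e i) ∧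
    ∀ i j k, i < j → j < k → 0 < e i → e i = e j → e i ≤ e k

def HasPosRepeat (e : Fin n → ℕ) : Prop := ∃ i j, i < j ∧ 0 < e i ∧ e i = e j

theorem invSeq_and_avoids_012_021_iff {e : Fin n → ℕ} (hn : 0 < n) :
    InvSeq e ∧ Avoids e [0, 1, 2] ∧ Avoids e [0, 2, 1] ↔ ConstPos e := by
  constructor
  · rintro ⟨he, h012, h021⟩
    obtain ⟨z, hz, hzlt⟩ := he.exists_zero_lt hn
    have key : ∀ i j, i < j → 0 < e i → 0 < e j → e i = e j := by
      intro i j hij hi hj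
      rcases lt_trichotomy (e i) (e j) with h | h | h
      · exact absurd ((contains_012_iff e).2 ⟨z, i, j, hzlt i hi, hij, hz ▸ hi, h⟩) h012
      · exact h
      · exact absurd ((contains_021_iff e).2 ⟨z, i, j, hzlt i hi, hij, hz ▸ hj, h⟩) h021
    refine ⟨he, fun i j hi hj => ?_⟩
    rcases lt_trichotomy i j with h | rfl | h
    exacts [key i j h hi hj, rfl, (key j i h hj hi).symm]
  · rintro ⟨he, hconst⟩
    refine ⟨he, fun h => ?_, fun h => ?_⟩
    · obtain ⟨i, j, k, -, -, hij, hjk⟩ := (contains_012_iff e).1 h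
      have := hconst j k (by omega) (by omega)
      omega
    · obtain ⟨i, j, k, -, -, hik, hkj⟩ := (contains_021_iff e).1 h
      have := hconst j k (by omega) (by omega)
      omega

theorem invSeq_and_avoids_110_012_iff {e : Fin n → ℕ} (hn : 0 < n) :
    InvSeq e ∧ Avoids e [1, 1, 0] ∧ Avoids e [0, 1, 2] ↔ WeakAntiPos e := by
  constructor
  · rintro ⟨he, h110, h012⟩
    obtain ⟨z, hz, hzlt⟩ := he.exists_zero_lt hn
    refine ⟨he, fun i j hij hi => ?_, fun i j k hij hjk _ hij' => ?_⟩
    · by_contra! h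
      exact h012 ((contains_012_iff e).2 ⟨z, i, j, hzlt i hi, hij, hz ▸ hi, h⟩)
    · by_contra! h
      exact h110 ((contains_110_iff e).2 ⟨i, j, k, hij, hjk, hij', hij' ▸ h⟩)
  · rintro ⟨he, hanti, hfreeze⟩
    refine ⟨he, fun h => ?_, fun h => ?_⟩
    · obtain ⟨i, j, k, hij, hjk, hij', hkj⟩ := (contains_110_iff e).1 h
      have := hfreeze i j k hij hjk (by omega) hij'
      omega
    · obtain ⟨i, j, k, -, hjk, hij, hjk'⟩ := (contains_012_iff e).1 h
      have := hanti j k hjk (by omega)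
      omega

theorem finite_of_imp_invSeq {P : (Fin n → ℕ) → Prop} (h : ∀ e, P e → InvSeq e) :
    Finite {e // P e} :=
  Finite.of_injective
    (fun (e : {e // P e}) (i : Fin n) => (⟨e.1 i, (h _ e.2 i).trans_lt i.2⟩ : Fin n))
    fun _ _ hef => Subtype.ext <| funext fun i => congrArg Fin.val (congrFun hef i)

theorem invSeq_snoc_iff {e : Fin n → ℕ} {y : ℕ} : InvSeq (Fin.snoc e y) ↔ InvSeq e ∧ y ≤ n := by
  simp [InvSeq, Fin.forall_fin_succ']

theorem constPos_snoc_iff {e : Fin n → ℕ} {y : ℕ} :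
    ConstPos (Fin.snoc e y) ↔ ConstPos e ∧ y ≤ n ∧ (0 < y → ∀ i, 0 < e i → e i = y) := by
  simp only [ConstPos, invSeq_snoc_iff, Fin.forall_fin_succ', Fin.snoc_castSucc, Fin.snoc_last,
    forall_and]
  grind

theorem strictAntiPos_snoc_iff {e : Fin n → ℕ} {x y : ℕ} :
    StrictAntiPos x (Fin.snoc e y) ↔
      StrictAntiPos x e ∧ y = 0 ∨ x < y ∧ y ≤ n ∧ StrictAntiPos y e := by
  simp only [StrictAntiPos, invSeq_snoc_iff, Fin.forall_fin_succ', Fin.snoc_castSucc, Fin.snoc_last,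
    Fin.castSucc_lt_castSucc_iff, Fin.castSucc_lt_last, forall_and]
  grind

theorem weakAntiPos_snoc_iff {e : Fin n → ℕ} {y : ℕ} :
    WeakAntiPos (Fin.snoc e y) ↔ WeakAntiPos e ∧ y ≤ n ∧
      (∀ i, 0 < e i → y ≤ e i) ∧ ∀ i j, i < j → 0 < e i → e i = e j → e i ≤ y := by
  simp only [WeakAntiPos, invSeq_snoc_iff, Fin.forall_fin_succ', Fin.snoc_castSucc, Fin.snoc_last,
    Fin.castSucc_lt_castSucc_iff, Fin.castSucc_lt_last, forall_and]
  grind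

theorem hasPosRepeat_snoc_iff {e : Fin n → ℕ} {y : ℕ} :
    HasPosRepeat (Fin.snoc e y) ↔ HasPosRepeat e ∨ 0 < y ∧ ∃ i, e i = y := by
  simp only [HasPosRepeat, Fin.exists_fin_succ', Fin.snoc_castSucc, Fin.snoc_last,
    Fin.castSucc_lt_castSucc_iff, Fin.castSucc_lt_last, exists_or]
  grind

theorem constPos_zero : ConstPos (0 : Fin n → ℕ) := ⟨fun _ => Nat.zero_le _, by simp⟩

theorem card_constPos_init_eq_zero :
    Nat.card {e : Fin (n + 1) → ℕ // ConstPos e ∧ Fin.init e = 0} = n + 1 := by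
  have hmem (y : Fin (n + 1)) : ConstPos (Fin.snoc 0 (y : ℕ) : Fin (n + 1) → ℕ) ∧
      Fin.init (Fin.snoc 0 (y : ℕ) : Fin (n + 1) → ℕ) = 0 :=
    ⟨by simpa [constPos_snoc_iff, constPos_zero] using Nat.lt_succ_iff.1 y.2, Fin.init_snoc _ _⟩
  refine (Nat.card_eq_of_bijective (fun y => ⟨_, hmem y⟩) ⟨?_, ?_⟩).symm.trans (Nat.card_fin _)
  · intro y z h
    exact Fin.ext (by simpa using congrFun (congrArg Subtype.val h) (Fin.last n))
  · rintro ⟨e, he, hinit⟩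
    refine ⟨⟨e (Fin.last n), Nat.lt_succ_iff.2 ?_⟩, Subtype.ext ?_⟩
    · simpa using he.1 (Fin.last n)
    · dsimp only
      rw [← hinit, Fin.snoc_init_self]

theorem card_constPos_init_ne_zero :
    Nat.card {e : Fin (n + 1) → ℕ // ConstPos e ∧ Fin.init e ≠ 0} =
      2 * (Nat.card {e : Fin n → ℕ // ConstPos e} - 1) := by
  rw [Nat.card_subtype_eq_card_and_add_card_and_not (finite_of_imp_invSeq fun _ h => h.1.1)
    (fun e => e (Fin.last n) = 0), ← Nat.card_subtype_and_ne (finite_of_imp_invSeq fun _ h => h.1)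
    constPos_zero, two_mul]
  congr 1
  · refine Nat.card_subtype_snoc (fun e => ?_) fun e y z hy hz => ?_
    · simp [constPos_snoc_iff]
    · simp only [Fin.snoc_last] at hy hz
      rw [hy.2, hz.2]
  · refine Nat.card_subtype_snoc (fun e => ?_) fun e y z hy hz => ?_
    · simp only [constPos_snoc_iff, Fin.init_snoc, Fin.snoc_last]
      constructor
      · rintro ⟨he, hne⟩
        obtain ⟨i, hi⟩ := Function.ne_iff.1 hne
        exact ⟨e i, ⟨⟨he, (he.1 i).trans i.2.le,
          fun _ j hj => he.2 j i hj (Nat.pos_of_ne_zero hi)⟩, hne⟩, hi⟩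
      · rintro ⟨y, ⟨⟨he, -⟩, hne⟩, -⟩
        exact ⟨he, hne⟩
    · simp only [constPos_snoc_iff, Fin.init_snoc, Fin.snoc_last] at hy hz
      obtain ⟨i, hi⟩ := Function.ne_iff.1 hy.1.2
      rw [← hy.1.1.2.2 (Nat.pos_of_ne_zero hy.2) i (Nat.pos_of_ne_zero hi),
        hz.1.1.2.2 (Nat.pos_of_ne_zero hz.2) i (Nat.pos_of_ne_zero hi)]

theorem card_constPos (n : ℕ) : Nat.card {e : Fin n → ℕ // ConstPos e} = 2 ^ n - n := by
  induction n with
  | zero => exact Nat.card_subtype_fin_zero constPos_zero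
  | succ n ih =>
    rw [Nat.card_subtype_eq_card_and_add_card_and_not (finite_of_imp_invSeq fun _ h => h.1)
      (fun e => Fin.init e = 0), card_constPos_init_eq_zero, card_constPos_init_ne_zero, ih]
    have := Nat.lt_two_pow_self (n := n)
    rw [pow_succ]
    omega

theorem card_strictAntiPos_succ_eq_add (x : ℕ) :
    Nat.card {e : Fin (n + 1) → ℕ // StrictAntiPos x e} =
      Nat.card {e : Fin n → ℕ // StrictAntiPos x e} +
        Nat.card {e : Fin (n + 1) → ℕ // StrictAntiPos x e ∧ e (Fin.last n) ≠ 0} := by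
  rw [Nat.card_subtype_eq_card_and_add_card_and_not
    (finite_of_imp_invSeq fun _ h => h.1) (fun e => e (Fin.last n) = 0)]
  congr 1
  refine Nat.card_subtype_snoc (fun e => ?_) fun e y z hy hz => ?_
  · simp [strictAntiPos_snoc_iff]
  · simp only [Fin.snoc_last] at hy hz
    rw [hy.2, hz.2]

theorem card_strictAntiPos_last_ne_zero {x : ℕ} (hx : n ≤ x) :
    Nat.card {e : Fin (n + 1) → ℕ // StrictAntiPos x e ∧ e (Fin.last n) ≠ 0} = 0 := by
  rw [Nat.card_eq_zero]
  left
  refine ⟨fun ⟨e, he, hne⟩ => ?_⟩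
  have hle : e (Fin.last n) ≤ n := he.1 (Fin.last n)
  have hlt := he.2.1 _ (Nat.pos_of_ne_zero hne)
  omega

theorem card_strictAntiPos_last_ne_zero_eq_add {x : ℕ} (hx : x < n) :
    Nat.card {e : Fin (n + 1) → ℕ // StrictAntiPos x e ∧ e (Fin.last n) ≠ 0} =
      Nat.card {e : Fin n → ℕ // StrictAntiPos (x + 1) e} +
        Nat.card {e : Fin (n + 1) → ℕ // StrictAntiPos (x + 1) e ∧ e (Fin.last n) ≠ 0} := by
  rw [Nat.card_subtype_eq_card_and_add_card_and_not
    (finite_of_imp_invSeq fun _ h => h.1.1) (fun e => e (Fin.last n) = x + 1)]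
  congr 1
  · refine Nat.card_subtype_snoc (fun e => ?_) fun e y z hy hz => ?_
    · simpa [strictAntiPos_snoc_iff] using fun _ => hx
    · simp only [Fin.snoc_last] at hy hz
      rw [hy.2, hz.2]
  · -- the last positive entry is the smallest one
    refine Nat.card_congr (Equiv.subtypeEquivRight fun e => ?_)
    constructor
    · rintro ⟨⟨⟨hinv, habove, hanti⟩, hlast⟩, hlast'⟩
      have hx' := habove _ (Nat.pos_of_ne_zero hlast)
      refine ⟨⟨hinv, fun i hi => ?_, hanti⟩, hlast⟩
      rcases (Fin.le_last i).lt_or_eq with h | rfl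
      · have := hanti i _ h hi (Nat.pos_of_ne_zero hlast)
        omega
      · omega
    · rintro ⟨⟨hinv, habove, hanti⟩, hlast⟩
      have := habove _ (Nat.pos_of_ne_zero hlast)
      exact ⟨⟨⟨hinv, fun i hi => (habove i hi).trans' x.lt_succ_self, hanti⟩, hlast⟩, by omega⟩

theorem card_strictAntiPos_succ_of_lt {x : ℕ} (hx : x < n) :
    Nat.card {e : Fin (n + 1) → ℕ // StrictAntiPos x e} =
      Nat.card {e : Fin n → ℕ // StrictAntiPos x e} +
        Nat.card {e : Fin (n + 1) → ℕ // StrictAntiPos (x + 1) e} := by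
  rw [card_strictAntiPos_succ_eq_add, card_strictAntiPos_last_ne_zero_eq_add hx,
    card_strictAntiPos_succ_eq_add (x + 1)]

theorem card_strictAntiPos_succ_of_le {x : ℕ} (hx : n ≤ x) :
    Nat.card {e : Fin (n + 1) → ℕ // StrictAntiPos x e} =
      Nat.card {e : Fin n → ℕ // StrictAntiPos x e} := by
  rw [card_strictAntiPos_succ_eq_add, card_strictAntiPos_last_ne_zero hx, add_zero]

theorem card_strictAntiPos : ∀ n x : ℕ,
    Nat.card {e : Fin n → ℕ // StrictAntiPos x e} = 2 ^ (n - 1 - x)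
  | 0, x => by
    rw [Nat.zero_sub, pow_zero]
    exact Nat.card_subtype_fin_zero (e := 0) ⟨fun i => i.elim0, fun i => i.elim0, fun i => i.elim0⟩
  | n + 1, x => by
    rcases lt_or_ge x n with hx | hx
    · rw [card_strictAntiPos_succ_of_lt hx, card_strictAntiPos n x,
        card_strictAntiPos (n + 1) (x + 1)]
      obtain ⟨k, rfl⟩ : ∃ k, n = x + k + 1 := ⟨n - x - 1, by omega⟩
      rw [show x + k + 1 - 1 - x = k by omega, show x + k + 1 + 1 - 1 - (x + 1) = k by omega,
        show x + k + 1 + 1 - 1 - x = k + 1 by omega, pow_succ]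
      ring
    · rw [card_strictAntiPos_succ_of_le hx, card_strictAntiPos n x]
      congr 1
      omega
termination_by n x => (n, n - x)

theorem StrictAntiPos.not_hasPosRepeat {x : ℕ} {e : Fin n → ℕ} (he : StrictAntiPos x e) :
    ¬ HasPosRepeat e := fun ⟨i, j, hij, hi, h⟩ => (he.2.2 i j hij hi (h ▸ hi)).ne' h

theorem weakAntiPos_and_not_hasPosRepeat_iff {e : Fin n → ℕ} :
    WeakAntiPos e ∧ ¬ HasPosRepeat e ↔ StrictAntiPos 0 e := by
  constructor
  · rintro ⟨⟨hinv, hanti, -⟩, hrep⟩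
    refine ⟨hinv, fun _ hi => hi, fun i j hij hi _ => (hanti i j hij hi).lt_of_ne fun h => ?_⟩
    exact hrep ⟨i, j, hij, hi, h.symm⟩
  · rintro ⟨hinv, -, hanti⟩
    refine ⟨⟨hinv, fun i j hij hi => ?_, fun i j k hij _ hi h => ?_⟩, fun ⟨i, j, hij, hi, h⟩ => ?_⟩
    · rcases Nat.eq_zero_or_pos (e j) with hj | hj
      · omega
      · exact (hanti i j hij hi hj).le
    · exact absurd h (hanti i j hij hi (h ▸ hi)).ne'
    · exact absurd h (hanti i j hij hi (h ▸ hi)).ne'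

theorem exists_min_pos_of_ne_zero {e : Fin n → ℕ} (he : e ≠ 0) :
    ∃ i, 0 < e i ∧ ∀ j, 0 < e j → e i ≤ e j := by
  obtain ⟨j, hj⟩ := Function.ne_iff.1 he
  obtain ⟨i, hi, hmin⟩ := Finset.exists_min_image (Finset.univ.filter fun j => 0 < e j) e
    ⟨j, by simpa [Nat.pos_iff_ne_zero] using hj⟩
  simp only [Finset.mem_filter, Finset.mem_univ, true_and] at hi hmin
  exact ⟨i, hi, hmin⟩

theorem exists_snoc_weakAntiPos_hasPosRepeat_iff {e : Fin n → ℕ} :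
    (∃ y, WeakAntiPos (Fin.snoc e y) ∧ HasPosRepeat (Fin.snoc e y)) ↔
      WeakAntiPos e ∧ HasPosRepeat e ∨ StrictAntiPos 0 e ∧ e ≠ 0 := by
  simp only [weakAntiPos_snoc_iff, hasPosRepeat_snoc_iff]
  constructor
  · rintro ⟨y, ⟨hwa, -⟩, hrep⟩
    by_cases h : HasPosRepeat e
    · exact Or.inl ⟨hwa, h⟩
    · obtain ⟨hy, i, rfl⟩ := hrep.resolve_left h
      exact Or.inr ⟨weakAntiPos_and_not_hasPosRepeat_iff.1 ⟨hwa, h⟩, Function.ne_iff.2 ⟨i, hy.ne'⟩⟩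
  · rintro (⟨hwa, i, j, hij, hi, hij'⟩ | ⟨hsa, he⟩)
    · refine ⟨e i, ⟨hwa, ?_, fun k hk => ?_, fun k l hkl hk hkl' => ?_⟩,
        Or.inl ⟨i, j, hij, hi, hij'⟩⟩
      · exact (hwa.1 i).trans_lt i.2 |>.le
      · rcases lt_trichotomy k j with hkj | rfl | hjk
        · exact hij' ▸ hwa.2.1 k j hkj hk
        · exact hij'.le
        · exact hwa.2.2 i j k hij hjk hi hij'
      · rcases lt_or_ge l j with hlj | hjl
        · exact hij' ▸ hwa.2.2 k l j hkl hlj hk hkl'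
        · rcases hjl.lt_or_eq with hjl | rfl
          · exact hkl' ▸ hij' ▸ hwa.2.1 j l hjl (hij' ▸ hi)
          · exact hkl' ▸ hij'.ge
    · obtain ⟨i, hi, hmin⟩ := exists_min_pos_of_ne_zero he
      have hwa := weakAntiPos_and_not_hasPosRepeat_iff.2 hsa
      refine ⟨e i, ⟨hwa.1, (hwa.1.1 i).trans_lt i.2 |>.le, hmin, fun k l hkl hk hkl' => ?_⟩,
        Or.inr ⟨hi, i, rfl⟩⟩
      exact absurd hkl' (hsa.2.2 k l hkl hk (hkl' ▸ hk)).ne'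

theorem eq_of_snoc_weakAntiPos_hasPosRepeat {e : Fin n → ℕ} {y z : ℕ}
    (hy : WeakAntiPos (Fin.snoc e y) ∧ HasPosRepeat (Fin.snoc e y))
    (hz : WeakAntiPos (Fin.snoc e z) ∧ HasPosRepeat (Fin.snoc e z)) :
    y = z := by
  have key : ∀ y, WeakAntiPos (Fin.snoc e y) ∧
      HasPosRepeat (Fin.snoc e y) →
      (∃ i, 0 < e i ∧ e i = y) ∧ ∀ k, 0 < e k → y ≤ e k := by
    intro y h
    simp only [weakAntiPos_snoc_iff, hasPosRepeat_snoc_iff] at h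
    obtain ⟨⟨-, -, hle, hfreeze⟩, hrep⟩ := h
    refine ⟨?_, hle⟩
    rcases hrep with ⟨i, j, hij, hi, h⟩ | ⟨hy, i, rfl⟩
    · exact ⟨i, hi, le_antisymm (hfreeze i j hij hi h) (hle i hi)⟩
    · exact ⟨i, hy, rfl⟩
  obtain ⟨⟨i, hi, rfl⟩, hy⟩ := key y hy
  obtain ⟨⟨j, hj, rfl⟩, hz⟩ := key z hz
  exact le_antisymm (hy j hj) (hz i hi)

theorem card_strictAntiPos_ne_zero :
    Nat.card {e : Fin n → ℕ // StrictAntiPos 0 e ∧ e ≠ 0} = 2 ^ (n - 1) - 1 := by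
  rw [Nat.card_subtype_and_ne (finite_of_imp_invSeq fun _ h => h.1)
    ⟨fun _ => Nat.zero_le _, by simp, by simp⟩, card_strictAntiPos, Nat.sub_zero]

theorem card_weakAntiPos_hasPosRepeat_succ :
    Nat.card {e : Fin (n + 1) → ℕ // WeakAntiPos e ∧ HasPosRepeat e} =
      Nat.card {e : Fin n → ℕ // WeakAntiPos e ∧ HasPosRepeat e} + (2 ^ (n - 1) - 1) := by
  rw [Nat.card_subtype_snoc (fun _ => exists_snoc_weakAntiPos_hasPosRepeat_iff.symm)
    fun _ _ _ => eq_of_snoc_weakAntiPos_hasPosRepeat, ← card_strictAntiPos_ne_zero,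
    Nat.card_subtype_eq_card_and_add_card_and_not
      (finite_of_imp_invSeq fun _ h => h.elim (·.1.1) (·.1.1)) HasPosRepeat]
  congr 1 <;> refine Nat.card_congr (Equiv.subtypeEquivRight fun e => ?_)
  · exact ⟨fun ⟨h, hrep⟩ => h.resolve_right fun h' => h'.1.not_hasPosRepeat hrep,
      fun h => ⟨Or.inl h, h.2⟩⟩
  · exact ⟨fun ⟨h, hrep⟩ => h.resolve_left fun h' => hrep h'.2,
      fun h => ⟨Or.inr h, h.1.not_hasPosRepeat⟩⟩

theorem card_weakAntiPos_hasPosRepeat (n : ℕ) :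
    Nat.card {e : Fin (n + 1) → ℕ // WeakAntiPos e ∧ HasPosRepeat e} = 2 ^ n - (n + 1) := by
  induction n with
  | zero =>
    rw [show 2 ^ 0 - (0 + 1) = 0 from rfl, Nat.card_eq_zero]
    exact Or.inl ⟨fun ⟨_, _, i, j, hij, _⟩ => by omega⟩
  | succ n ih =>
    rw [card_weakAntiPos_hasPosRepeat_succ, ih]
    have := Nat.lt_two_pow_self (n := n)
    rw [pow_succ, Nat.add_sub_cancel]
    omega

theorem card_weakAntiPos (n : ℕ) :
    Nat.card {e : Fin (n + 1) → ℕ // WeakAntiPos e} = 2 ^ (n + 1) - (n + 1) := by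
  rw [Nat.card_subtype_eq_card_and_add_card_and_not (finite_of_imp_invSeq fun _ h => h.1)
    HasPosRepeat, card_weakAntiPos_hasPosRepeat, Nat.card_congr (Equiv.subtypeEquivRight
      fun _ => weakAntiPos_and_not_hasPosRepeat_iff), card_strictAntiPos]
  have := Nat.lt_two_pow_self (n := n)
  rw [pow_succ]
  simp only [Nat.add_sub_cancel, Nat.sub_zero]
  omega

end InversionSequences

theorem stmt_4 (n : ℕ) (hn : 1 ≤ n) (p q : List ℕ)
    (hpq : (p, q) = ([0,1,2], [0,2,1]) ∨ (p, q) = ([1,1,0], [0,1,2])) :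
    Nat.card {e : Fin n → ℕ // InvSeq e ∧ Avoids e p ∧ Avoids e q}
      = 2 ^ n - n := by
  rcases hpq with h | h <;> obtain ⟨rfl, rfl⟩ := Prod.mk.inj h
  · rw [Nat.card_congr (Equiv.subtypeEquivRight fun _ => invSeq_and_avoids_012_021_iff hn),
      card_constPos]
  · obtain ⟨m, rfl⟩ : ∃ m, n = m + 1 := ⟨n - 1, by omega⟩
    rw [Nat.card_congr (Equiv.subtypeEquivRight fun _ => invSeq_and_avoids_110_012_iff hn),
      card_weakAntiPos]
end
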